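/- On flat ℝ³, for every smooth 1-form W, the conformal Killing operator output (LW)_{ab} = D_{(a}W_{b)} - (1/3) g_{ab} D^c W_c satisfies ℛ(LW) = 0, where ℛ is the linearised Cotton–York operator. Thus L followed by ℛ is a complex. -/

import Mathlib

noncomputable section

abbrev E3 := EuclideanSpace ℝ (Fin 3)

/-- Partial derivative (the flat connection `D` in Cartesian coordinates). -/
noncomputable def pd (i : Fin 3) (f : E3 → ℝ) (x : E3) : ℝ :=
  fderiv ℝ f x (EuclideanSpace.single i 1)

/-- The Levi-Civita symbol `ε_{cda}` on ℝ³. -/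
noncomputable def levi (c d a : Fin 3) : ℝ :=
  (Matrix.of ![(Pi.single c (1 : ℝ) : Fin 3 → ℝ), Pi.single d 1, Pi.single a 1]).det

/-- The Euclidean metric `g_{ab} = δ_{ab}`. -/
def gmet (a b : Fin 3) : ℝ := if a = b then 1 else 0

/-- `σ_{ab} = D_{(a}D^c ψ_{b)c} - (1/2) Δ ψ_{ab} - (1/4) g_{ab} D^c D^d ψ_{cd}`. -/
noncomputable def sigmaT (ψ : E3 → Fin 3 → Fin 3 → ℝ) (x : E3) (a b : Fin 3) : ℝ :=
  (1 / 2) * ((∑ c, pd a (fun y => pd c (fun z => ψ z b c) y) x)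
      + ∑ c, pd b (fun y => pd c (fun z => ψ z a c) y) x)
    - (1 / 2) * ∑ c, pd c (fun y => pd c (fun z => ψ z a b) y) x
    - (1 / 4) * gmet a b * ∑ c, ∑ d, pd c (fun y => pd d (fun z => ψ z c d) y) x

/-- The linearised Cotton–York operator `ℛ(ψ)_{ab} = ε^{cd}{}_a D_{[c}σ_{d]b}`. -/
noncomputable def cottonYork (ψ : E3 → Fin 3 → Fin 3 → ℝ) (x : E3) (a b : Fin 3) : ℝ :=
  ∑ c, ∑ d, levi c d a *
    ((1 / 2) * (pd c (fun y => sigmaT ψ y d b) x - pd d (fun y => sigmaT ψ y c b) x))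

/-- The conformal Killing operator
`(LW)_{ab} = D_{(a}W_{b)} - (1/3) g_{ab} D^c W_c` on 1-forms. -/
noncomputable def confKilling (W : E3 → Fin 3 → ℝ) (x : E3) (a b : Fin 3) : ℝ :=
  (1 / 2) * (pd a (fun y => W y b) x + pd b (fun y => W y a) x)
    - (1 / 3) * gmet a b * ∑ c, pd c (fun y => W y c) x

/- Auxiliary lemmas -/

@[fun_prop]
theorem contDiff_pd {f : E3 → ℝ} (hf : ContDiff ℝ (⊤ : ℕ∞) f) (i : Fin 3) :
    ContDiff ℝ (⊤ : ℕ∞) (fun x => pd i f x) := by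
  have h1 : ContDiff ℝ (⊤ : ℕ∞) (fderiv ℝ f) := hf.fderiv_right (by exact (by simp))
  exact (ContinuousLinearMap.apply ℝ ℝ (EuclideanSpace.single i 1)).contDiff.comp h1

@[fun_prop]
theorem differentiable_pd {f : E3 → ℝ} (hf : ContDiff ℝ (⊤ : ℕ∞) f) (i : Fin 3) :
    Differentiable ℝ (fun x => pd i f x) :=
  (contDiff_pd hf i).differentiable (by simp)

theorem pd_add {f g : E3 → ℝ} {x : E3} (hf : DifferentiableAt ℝ f x)
    (hg : DifferentiableAt ℝ g x) (i : Fin 3) :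
    pd i (fun y => f y + g y) x = pd i f x + pd i g x := by
  simp [pd, fderiv_fun_add hf hg]

theorem pd_sub {f g : E3 → ℝ} {x : E3} (hf : DifferentiableAt ℝ f x)
    (hg : DifferentiableAt ℝ g x) (i : Fin 3) :
    pd i (fun y => f y - g y) x = pd i f x - pd i g x := by
  simp [pd, fderiv_fun_sub hf hg]

theorem pd_const_mul {f : E3 → ℝ} {x : E3} (hf : DifferentiableAt ℝ f x) (c : ℝ) (i : Fin 3) :
    pd i (fun y => c * f y) x = c * pd i f x := by
  simp [pd, fderiv_const_mul hf c]

theorem pd_mul_const {f : E3 → ℝ} {x : E3} (hf : DifferentiableAt ℝ f x) (c : ℝ) (i : Fin 3) :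
    pd i (fun y => f y * c) x = pd i f x * c := by
  rw [show (fun y => f y * c) = fun y => c * f y from funext fun y => mul_comm _ _,
    pd_const_mul hf, mul_comm]

theorem pd_const (c : ℝ) (i : Fin 3) (x : E3) : pd i (fun _ => c) x = 0 := by
  simp [pd]

theorem pd_comm {f : E3 → ℝ} (hf : ContDiff ℝ (⊤ : ℕ∞) f) (i j : Fin 3) (x : E3) :
    pd i (fun y => pd j f y) x = pd j (fun y => pd i f y) x := by
  have hsym : IsSymmSndFDerivAt ℝ f x :=
    hf.contDiffAt.isSymmSndFDerivAt (by rw [minSmoothness_of_isRCLikeNormedField]; exact WithTop.coe_le_coe.mpr (le_top : (2 : ℕ∞) ≤ ⊤))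
  have hd : Differentiable ℝ (fderiv ℝ f) :=
    (hf.fderiv_right (m := (⊤ : ℕ∞)) (by exact (by simp))).differentiable (by simp)
  have key : ∀ v w : E3,
      fderiv ℝ (fun y => fderiv ℝ f y w) x v = fderiv ℝ (fderiv ℝ f) x v w := by
    intro v w
    rw [fderiv_clm_apply (hd x) (differentiableAt_const w)]
    simp
  simp only [pd]
  rw [key, key, hsym]

set_option maxHeartbeats 2000000 in
/-- Key computation: `σ(LW)_{ab} = (1/6) ∂_a ∂_b (div W)`. -/
theorem sigma_confKilling (W : E3 → Fin 3 → ℝ)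
    (hsmooth : ∀ b, ContDiff ℝ (⊤ : ℕ∞) (fun x => W x b)) :
    ∀ (x : E3) (a b : Fin 3), sigmaT (confKilling W) x a b
      = (1 / 6) * pd a (fun y => pd b (fun z => ∑ c, pd c (fun w => W w c) z) y) x := by
  intro x a b
  have h10 := fun (f : E3 → ℝ) (hf : ContDiff ℝ (⊤ : ℕ∞) f) => funext (pd_comm hf 1 0)
  have h20 := fun (f : E3 → ℝ) (hf : ContDiff ℝ (⊤ : ℕ∞) f) => funext (pd_comm hf 2 0)
  have h21 := fun (f : E3 → ℝ) (hf : ContDiff ℝ (⊤ : ℕ∞) f) => funext (pd_comm hf 2 1)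
  fin_cases a <;> fin_cases b <;>
    (simp (disch := fun_prop) [sigmaT, confKilling, gmet, Fin.sum_univ_three, pd_add,
      pd_sub, pd_const_mul, pd_mul_const, pd_const, h10, h20, h21]; ring)

/-- on flat ℝ³, `ℛ(LW) = 0` for every smooth 1-form `W`; i.e. the
conformal Killing operator followed by the linearised Cotton–York operator is a
complex. -/
theorem stmt14 (W : E3 → Fin 3 → ℝ)
    (hsmooth : ∀ b, ContDiff ℝ (⊤ : ℕ∞) (fun x => W x b)) :
    ∀ x a b, cottonYork (confKilling W) x a b = 0 := by
  intro x a b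
  have hθ : ContDiff ℝ (⊤ : ℕ∞) (fun z => ∑ c, pd c (fun w => W w c) z) := by
    simp only [Fin.sum_univ_three]
    fun_prop
  have key : ∀ c d : Fin 3,
      pd c (fun y => sigmaT (confKilling W) y d b) x
        - pd d (fun y => sigmaT (confKilling W) y c b) x = 0 := by
    intro c d
    have h1 : ∀ e : Fin 3, (fun y => sigmaT (confKilling W) y e b)
        = fun y => (1 / 6) * pd e (fun z => pd b (fun w => ∑ c', pd c' (fun u => W u c') w) z) y :=
      fun e => funext fun y => sigma_confKilling W hsmooth y e b
    rw [h1 d, h1 c, pd_const_mul (by fun_prop), pd_const_mul (by fun_prop)]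
    have := pd_comm (f := fun z => pd b (fun w => ∑ c', pd c' (fun u => W u c') w) z)
      (by fun_prop) c d x
    rw [this]
    ring
  simp only [cottonYork, key, mul_zero, Finset.sum_const_zero]
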